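/- There is an absolute constant C such that for all differentiable g₁, g₂ : ℝ → ℝ with g_i and g_i' square-integrable, and for every α ≠ 0: ∫_ℝ |Δ_α g₁(y)·Δ_α g₂(y)| dy + ( ∫_ℝ |Δ_α g₁(y)·Δ_α g₂(y)|² dy )^{1/2} ≤ C·min{ |α|^{−1/2}, |α|^{−3/2} }·‖g₁‖_{H¹}·‖g₂‖_{H¹}. -/

import Mathlib

open MeasureTheory Real Set Filter

/-- Sliding average `⨍_α f(y) = (1/α) ∫_{y-α}^{y} f(z) dz`. -/
noncomputable def fint (α : ℝ) (f : ℝ → ℝ) (y : ℝ) : ℝ :=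
  (1 / α) * ∫ z in (y - α)..y, f z

/-- Finite difference slope `Δ_α f(y) = (f(y) - f(y-α))/α`. -/
noncomputable def slopeOp (α : ℝ) (f : ℝ → ℝ) (y : ℝ) : ℝ :=
  (f y - f (y - α)) / α

/-- The profile `L_s(y) = (2s/π) arctan((1+s²/3) y)`. -/
noncomputable def Ls (s y : ℝ) : ℝ := (2 * s / Real.pi) * Real.arctan ((1 + s ^ 2 / 3) * y)

/-- `δ_α[f,g](y) = ⨍_α f ⨍_α g - ⨍_{-α} f ⨍_{-α} g`. -/
noncomputable def deltaOp (α : ℝ) (f g : ℝ → ℝ) (y : ℝ) : ℝ :=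
  fint α f y * fint α g y - fint (-α) f y * fint (-α) g y

/-- `J_α[f,g](y) = ⨍_α f ⨍_α g - 2 f g + ⨍_{-α} f ⨍_{-α} g`. -/
noncomputable def Jop (α : ℝ) (f g : ℝ → ℝ) (y : ℝ) : ℝ :=
  fint α f y * fint α g y - 2 * f y * g y + fint (-α) f y * fint (-α) g y

/-- The `H¹` norm `(∫ g² + ∫ (g')²)^{1/2}`. -/
noncomputable def H1norm (g : ℝ → ℝ) : ℝ :=
  Real.sqrt ((∫ y : ℝ, g y ^ 2) + ∫ y : ℝ, deriv g y ^ 2)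

/-! By the fundamental theorem of calculus and Cauchy–Schwarz,
`(g y - g (y - α))² ≤ |α| ∫_{Ι (y - α) y} (g')²`. Enlarging the window to `ℝ` gives
`|Δ_α g| ≤ |α|^{-1/2} ‖g'‖₂`; integrating in `y` (Tonelli: each point lies in the window
`Ι (y - α) y` for a set of `y` of measure `|α|`) gives `‖Δ_α g‖₂ ≤ ‖g'‖₂`, while the triangle
inequality gives `‖Δ_α g‖₂ ≤ 2 |α|⁻¹ ‖g‖₂`. Hence `‖Δ_α g‖₂ ≤ 2 min{1, |α|⁻¹} ‖g‖_{H¹}`.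
The `L¹` norm of the product is at most `‖Δ_α g₁‖₂ ‖Δ_α g₂‖₂` and its `L²` norm at most
`‖Δ_α g₁‖_∞ ‖Δ_α g₂‖₂`; since `min{|α|^{-1/2}, |α|^{-3/2}} = |α|^{-1/2} min{1, |α|⁻¹}` and
`min{1, |α|⁻¹} ≤ |α|^{-1/2}`, both are bounded with `C = 6`. -/

open scoped ENNReal Interval

section CauchySchwarz

variable {X : Type*} [MeasurableSpace X] {μ : Measure X} {u v : X → ℝ}

lemma integral_abs_mul_le_sqrt_mul_sqrt (hu : MemLp u 2 μ) (hv : MemLp v 2 μ) :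
    ∫ x, |u x * v x| ∂μ ≤ √(∫ x, u x ^ 2 ∂μ) * √(∫ x, v x ^ 2 ∂μ) := by
  have h2 : ENNReal.ofReal 2 = 2 := by norm_num
  have := integral_mul_norm_le_Lp_mul_Lq (μ := μ) Real.HolderConjugate.two_two
    (h2 ▸ hu) (h2 ▸ hv)
  simpa [abs_mul, Real.sqrt_eq_rpow] using this

lemma integral_abs_le_sqrt_measureReal_mul_sqrt [IsFiniteMeasure μ] (hv : MemLp v 2 μ) :
    ∫ x, |v x| ∂μ ≤ √(μ.real univ) * √(∫ x, v x ^ 2 ∂μ) := by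
  simpa using integral_abs_mul_le_sqrt_mul_sqrt (memLp_const (1 : ℝ)) hv

lemma rpow_integral_sq_abs_mul_le {M : ℝ} (hM : 0 ≤ M) (hu : ∀ x, |u x| ≤ M)
    (hv : MemLp v 2 μ) :
    (∫ x, |u x * v x| ^ 2 ∂μ) ^ ((1 : ℝ) / 2) ≤ M * √(∫ x, v x ^ 2 ∂μ) := by
  have hle : ∫ x, |u x * v x| ^ 2 ∂μ ≤ ∫ x, M ^ 2 * v x ^ 2 ∂μ := by
    refine integral_mono_of_nonneg (.of_forall fun x => by positivity)
      (hv.integrable_sq.const_mul _) (.of_forall fun x => ?_)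
    dsimp only
    rw [sq_abs, mul_pow]
    exact mul_le_mul_of_nonneg_right (sq_le_sq.2 ((hu x).trans (le_abs_self M))) (sq_nonneg _)
  rw [← Real.sqrt_eq_rpow, ← Real.sqrt_sq hM, ← Real.sqrt_mul (sq_nonneg M), ← integral_const_mul]
  exact Real.sqrt_le_sqrt hle

end CauchySchwarz

lemma preimage_add_const_uIoc (a b c : ℝ) : (fun x => x + a) ⁻¹' Ι b c = Ι (b - a) (c - a) := by
  simp only [uIoc, preimage_add_const_Ioc, min_sub_sub_right, max_sub_sub_right]

lemma lintegral_setLIntegral_uIoc_sub {φ : ℝ → ℝ≥0∞} (hφ : Measurable φ) (α : ℝ) :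
    ∫⁻ y, ∫⁻ z in Ι (y - α) y, φ z = ENNReal.ofReal |α| * ∫⁻ z, φ z := by
  have hshift (y : ℝ) : ∫⁻ z in Ι (y - α) y, φ z = ∫⁻ t in Ι 0 α, φ (t + (y - α)) := by
    rw [← (measurePreserving_add_right volume (y - α)).setLIntegral_comp_preimage
      measurableSet_uIoc hφ, preimage_add_const_uIoc]
    congr 3 <;> ring
  simp_rw [hshift]
  rw [lintegral_lintegral_swap (by fun_prop)]
  simp_rw [show ∀ t y : ℝ, t + (y - α) = y + (t - α) from fun _ _ => by ring,
    lintegral_add_right_eq_self (μ := volume) φ, setLIntegral_const, Real.volume_uIoc, sub_zero,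
    mul_comm]

section Slope

variable {g : ℝ → ℝ}

lemma sq_sub_le_abs_mul_setIntegral_deriv_sq (hg : Differentiable ℝ g) {x y : ℝ}
    (hg' : MemLp (deriv g) 2 (volume.restrict (Ι x y))) :
    (g y - g x) ^ 2 ≤ |y - x| * ∫ z in Ι x y, deriv g z ^ 2 := by
  have : IsFiniteMeasure (volume.restrict (Ι x y)) :=
    isFiniteMeasure_restrict.2 (by simp [Real.volume_uIoc])
  have hftc : ∫ z in x..y, deriv g z = g y - g x :=
    intervalIntegral.integral_deriv_eq_sub (fun z _ => hg z)
      ((intervalIntegrable_iff).2 (hg'.integrable one_le_two))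
  have hcs : |g y - g x| ≤ √|y - x| * √(∫ z in Ι x y, deriv g z ^ 2) := by
    calc |g y - g x| = ‖∫ z in x..y, deriv g z‖ := by rw [hftc, Real.norm_eq_abs]
      _ ≤ ∫ z in Ι x y, |deriv g z| := intervalIntegral.norm_integral_le_integral_norm_uIoc
      _ ≤ _ := by
        simpa [measureReal_restrict_apply_univ, Measure.real, Real.volume_uIoc] using
          integral_abs_le_sqrt_measureReal_mul_sqrt hg'
  calc (g y - g x) ^ 2 = |g y - g x| ^ 2 := (sq_abs _).symm
    _ ≤ (√|y - x| * √(∫ z in Ι x y, deriv g z ^ 2)) ^ 2 := by gcongr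
    _ = _ := by
      rw [mul_pow, Real.sq_sqrt (abs_nonneg _),
        Real.sq_sqrt (setIntegral_nonneg measurableSet_uIoc fun z _ => sq_nonneg _)]

lemma memLp_slopeOp {p : ℝ≥0∞} (hg : MemLp g p volume) (α : ℝ) :
    MemLp (slopeOp α g) p volume := by
  convert (hg.sub (hg.comp_measurePreserving (measurePreserving_sub_right volume α))).mul_const α⁻¹
    using 1
  ext y
  simp [slopeOp, div_eq_mul_inv]

lemma integral_sq_slopeOp_le_of_memLp (hg : MemLp g 2 volume) (α : ℝ) :
    ∫ y, slopeOp α g y ^ 2 ≤ (2 / |α|) ^ 2 * ∫ y, g y ^ 2 := by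
  have hshift : MemLp (fun y => g (y - α)) 2 volume :=
    hg.comp_measurePreserving (measurePreserving_sub_right volume α)
  have hpt (y : ℝ) : slopeOp α g y ^ 2 ≤ 2 / α ^ 2 * (g y ^ 2 + g (y - α) ^ 2) := by
    rw [slopeOp, div_pow, div_mul_eq_mul_div]
    gcongr
    nlinarith [sq_nonneg (g y + g (y - α))]
  calc ∫ y, slopeOp α g y ^ 2
      ≤ ∫ y, 2 / α ^ 2 * (g y ^ 2 + g (y - α) ^ 2) :=
        integral_mono_of_nonneg (.of_forall fun _ => sq_nonneg _)
          ((hg.integrable_sq.add hshift.integrable_sq).const_mul _) (.of_forall hpt)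
    _ = 2 / α ^ 2 * ((∫ y, g y ^ 2) + ∫ y, g (y - α) ^ 2) := by
        rw [integral_const_mul, integral_add hg.integrable_sq hshift.integrable_sq]
    _ = (2 / |α|) ^ 2 * ∫ y, g y ^ 2 := by
        rw [integral_sub_right_eq_self (fun y => g y ^ 2) α, div_pow, sq_abs]
        ring

lemma sqrt_integral_sq_le_H1norm (g : ℝ → ℝ) : √(∫ y, g y ^ 2) ≤ H1norm g :=
  Real.sqrt_le_sqrt (le_add_of_nonneg_right (integral_nonneg fun _ => sq_nonneg _))

lemma sqrt_integral_deriv_sq_le_H1norm (g : ℝ → ℝ) : √(∫ y, deriv g y ^ 2) ≤ H1norm g :=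
  Real.sqrt_le_sqrt (le_add_of_nonneg_left (integral_nonneg fun _ => sq_nonneg _))

variable (hg : Differentiable ℝ g) (hg' : MemLp (deriv g) 2 volume) {α : ℝ} (hα : α ≠ 0)
include hg hg' hα

lemma sq_slopeOp_le (y : ℝ) :
    slopeOp α g y ^ 2 ≤ |α|⁻¹ * ∫ z in Ι (y - α) y, deriv g z ^ 2 := by
  have hα' : 0 < |α| := abs_pos.2 hα
  have h := sq_sub_le_abs_mul_setIntegral_deriv_sq hg (hg'.restrict (Ι (y - α) y))
  rw [sub_sub_cancel] at h
  rw [slopeOp, div_pow, ← sq_abs α, div_le_iff₀ (by positivity)]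
  exact h.trans_eq (by field_simp)

lemma abs_slopeOp_le (y : ℝ) :
    |slopeOp α g y| ≤ |α| ^ (-(1 : ℝ) / 2) * √(∫ z, deriv g z ^ 2) := by
  have hle : slopeOp α g y ^ 2 ≤ |α|⁻¹ * ∫ z, deriv g z ^ 2 :=
    (sq_slopeOp_le hg hg' hα y).trans <| mul_le_mul_of_nonneg_left
      (setIntegral_le_integral hg'.integrable_sq (.of_forall fun _ => sq_nonneg _))
      (by positivity)
  calc |slopeOp α g y| = √(slopeOp α g y ^ 2) := (Real.sqrt_sq_eq_abs _).symm
    _ ≤ √(|α|⁻¹ * ∫ z, deriv g z ^ 2) := Real.sqrt_le_sqrt hle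
    _ = _ := by
      rw [Real.sqrt_mul (by positivity), Real.sqrt_eq_rpow, ← Real.rpow_neg_one,
        ← Real.rpow_mul (abs_nonneg α)]
      norm_num

lemma integral_sq_slopeOp_le_integral_sq_deriv :
    ∫ y, slopeOp α g y ^ 2 ≤ ∫ z, deriv g z ^ 2 := by
  have hΔ : Continuous (slopeOp α g) := by unfold slopeOp; have := hg.continuous; fun_prop
  have hφ : Measurable fun z => ENNReal.ofReal (deriv g z ^ 2) := by fun_prop
  have hpt (y : ℝ) : ENNReal.ofReal (slopeOp α g y ^ 2)
      ≤ ENNReal.ofReal |α|⁻¹ * ∫⁻ z in Ι (y - α) y, ENNReal.ofReal (deriv g z ^ 2) := by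
    rw [← ofReal_integral_eq_lintegral_ofReal (hg'.restrict _).integrable_sq
      (.of_forall fun _ => sq_nonneg _), ← ENNReal.ofReal_mul (by positivity)]
    exact ENNReal.ofReal_le_ofReal (sq_slopeOp_le hg hg' hα y)
  have key : ∫⁻ y, ENNReal.ofReal (slopeOp α g y ^ 2) ≤ ∫⁻ z, ENNReal.ofReal (deriv g z ^ 2) :=
    calc _ ≤ ∫⁻ y, ENNReal.ofReal |α|⁻¹ * ∫⁻ z in Ι (y - α) y, ENNReal.ofReal (deriv g z ^ 2) :=
          lintegral_mono hpt
      _ = ENNReal.ofReal |α|⁻¹ * ENNReal.ofReal |α| * ∫⁻ z, ENNReal.ofReal (deriv g z ^ 2) := by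
          rw [lintegral_const_mul' _ _ ENNReal.ofReal_ne_top, lintegral_setLIntegral_uIoc_sub hφ,
            mul_assoc]
      _ = _ := by
          rw [← ENNReal.ofReal_mul (by positivity), inv_mul_cancel₀ (abs_pos.2 hα).ne',
            ENNReal.ofReal_one, one_mul]
  rw [integral_eq_lintegral_of_nonneg_ae (.of_forall fun _ => sq_nonneg _)
      (hΔ.pow 2).aestronglyMeasurable,
    integral_eq_lintegral_of_nonneg_ae (.of_forall fun _ => sq_nonneg _)
      hg'.integrable_sq.aestronglyMeasurable]
  exact ENNReal.toReal_mono hg'.integrable_sq.lintegral_lt_top.ne key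

lemma sqrt_integral_sq_slopeOp_le (hgL2 : MemLp g 2 volume) :
    √(∫ y, slopeOp α g y ^ 2) ≤ 2 * min 1 |α|⁻¹ * H1norm g := by
  have hH : 0 ≤ H1norm g := Real.sqrt_nonneg _
  rw [mul_min_of_nonneg _ _ zero_le_two, mul_one, min_mul_of_nonneg _ _ hH]
  refine le_min ?_ ?_
  · calc √(∫ y, slopeOp α g y ^ 2) ≤ √(∫ z, deriv g z ^ 2) :=
          Real.sqrt_le_sqrt (integral_sq_slopeOp_le_integral_sq_deriv hg hg' hα)
      _ ≤ H1norm g := sqrt_integral_deriv_sq_le_H1norm g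
      _ ≤ 2 * H1norm g := by linarith
  · calc √(∫ y, slopeOp α g y ^ 2) ≤ √((2 / |α|) ^ 2 * ∫ y, g y ^ 2) :=
          Real.sqrt_le_sqrt (integral_sq_slopeOp_le_of_memLp hgL2 α)
      _ = 2 / |α| * √(∫ y, g y ^ 2) := by
          rw [Real.sqrt_mul (sq_nonneg _), Real.sqrt_sq (by positivity)]
      _ ≤ 2 * |α|⁻¹ * H1norm g := by
          rw [div_eq_mul_inv]
          exact mul_le_mul_of_nonneg_left (sqrt_integral_sq_le_H1norm g) (by positivity)

end Slope

lemma min_rpow_neg_half_rpow_neg_three_half {x : ℝ} (hx : 0 < x) :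
    min (x ^ (-(1 : ℝ) / 2)) (x ^ (-(3 : ℝ) / 2)) = x ^ (-(1 : ℝ) / 2) * min 1 x⁻¹ := by
  rw [mul_min_of_nonneg _ _ (by positivity), mul_one, ← Real.rpow_neg_one, ← Real.rpow_add hx]
  norm_num

lemma min_one_inv_le_rpow_neg_half {x : ℝ} (hx : 0 < x) : min 1 x⁻¹ ≤ x ^ (-(1 : ℝ) / 2) := by
  rcases le_total x 1 with h | h
  · exact (min_le_left _ _).trans (Real.one_le_rpow_of_pos_of_le_one_of_nonpos hx h (by norm_num))
  · rw [← Real.rpow_neg_one]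
    exact (min_le_right _ _).trans (Real.rpow_le_rpow_of_exponent_le h (by norm_num))

/-- `L¹ ∩ L²` bounds for products of slopes of `H¹` functions. -/
theorem slope_product_bound :
    ∃ C : ℝ, 0 < C ∧ ∀ g₁ g₂ : ℝ → ℝ, Differentiable ℝ g₁ → Differentiable ℝ g₂ →
      MemLp g₁ 2 volume → MemLp (deriv g₁) 2 volume →
      MemLp g₂ 2 volume → MemLp (deriv g₂) 2 volume →
      ∀ α : ℝ, α ≠ 0 →
        (∫ y : ℝ, |slopeOp α g₁ y * slopeOp α g₂ y|)
          + (∫ y : ℝ, |slopeOp α g₁ y * slopeOp α g₂ y| ^ 2) ^ ((1:ℝ)/2)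
        ≤ C * min (|α| ^ (-(1:ℝ)/2)) (|α| ^ (-(3:ℝ)/2)) * H1norm g₁ * H1norm g₂ := by
  refine ⟨6, by norm_num, fun g₁ g₂ hd₁ hd₂ hg₁ hg₁' hg₂ hg₂' α hα => ?_⟩
  have hα' : 0 < |α| := abs_pos.2 hα
  rw [min_rpow_neg_half_rpow_neg_three_half hα']
  set r := |α| ^ (-(1 : ℝ) / 2)
  set m := min 1 |α|⁻¹
  have hH₁ : 0 ≤ H1norm g₁ := Real.sqrt_nonneg _
  have hH₂ : 0 ≤ H1norm g₂ := Real.sqrt_nonneg _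
  have hr : 0 ≤ r := Real.rpow_nonneg hα'.le _
  have hm : 0 ≤ m := le_min zero_le_one (by positivity)
  have hP₂ := sqrt_integral_sq_slopeOp_le hd₂ hg₂' hα hg₂
  have hL1 : ∫ y, |slopeOp α g₁ y * slopeOp α g₂ y| ≤ (2 * m * H1norm g₁) * (2 * m * H1norm g₂) :=
    (integral_abs_mul_le_sqrt_mul_sqrt (memLp_slopeOp hg₁ α) (memLp_slopeOp hg₂ α)).trans <|
      mul_le_mul (sqrt_integral_sq_slopeOp_le hd₁ hg₁' hα hg₁) hP₂ (Real.sqrt_nonneg _)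
        (mul_nonneg (mul_nonneg zero_le_two hm) hH₁)
  have hsup (y : ℝ) : |slopeOp α g₁ y| ≤ r * H1norm g₁ :=
    (abs_slopeOp_le hd₁ hg₁' hα y).trans
      (mul_le_mul_of_nonneg_left (sqrt_integral_deriv_sq_le_H1norm g₁) hr)
  have hL2 : (∫ y, |slopeOp α g₁ y * slopeOp α g₂ y| ^ 2) ^ ((1 : ℝ) / 2)
      ≤ r * H1norm g₁ * (2 * m * H1norm g₂) :=
    (rpow_integral_sq_abs_mul_le (mul_nonneg hr hH₁) hsup
      (memLp_slopeOp hg₂ α)).trans (mul_le_mul_of_nonneg_left hP₂ (mul_nonneg hr hH₁))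
  have hmr : m * (m * H1norm g₁ * H1norm g₂) ≤ r * (m * H1norm g₁ * H1norm g₂) :=
    mul_le_mul_of_nonneg_right (min_one_inv_le_rpow_neg_half hα')
      (mul_nonneg (mul_nonneg hm hH₁) hH₂)
  linarith
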